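/- Let (A, μ, λ, η, ε, Δ) be an odd BV Frobenius algebra. Then the BV Frobenius relation (Δ⊗1)λη = (1⊗Δ)λη is equivalent to εμ(Δ⊗1) = εμ(1⊗Δ). -/
import Mathlib


/-!
Common framework: a "super" (parity-graded) module `A` over a field `R`, with parity
operator `ι = (-1)^deg`, Koszul twist `τ` on `A ⊗ A`, product `mul = μ`, unit `e = η(1)`,
coproduct `cop = λ` (of odd degree) and BV operator `d = Δ` (of degree 1).
Operators such as `1⊗Δ`, `1⊗λ`, `1⊗Δ⊗1`, … carry Koszul signs, implemented by
inserting the parity operator `ι` on the tensor factors to the left of the odd map.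
Triple tensor products are written with the right-associated bracketing `A ⊗ (A ⊗ A)`.
-/

open TensorProduct

noncomputable section

variable {R : Type*} [Field R] {A : Type*} [AddCommGroup A] [Module R A]

/-- Data of a (parity-)graded module with product, unit, coproduct and BV operator:
`ι` is the parity operator `(-1)^deg`, `τ` is the Koszul twist `a⊗b ↦ (-1)^{|a||b|} b⊗a`. -/
structure BVData (R : Type*) (A : Type*) [Field R] [AddCommGroup A] [Module R A] where
  /-- the parity operator `(-1)^deg` -/
  ι : A →ₗ[R] A
  /-- the Koszul twist `τ` -/
  τ : A ⊗[R] A →ₗ[R] A ⊗[R] A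
  /-- the product `μ`, of degree 0 -/
  mul : A ⊗[R] A →ₗ[R] A
  /-- the unit `e = η(1)` -/
  e : A
  /-- the coproduct `λ`, of odd degree -/
  cop : A →ₗ[R] A ⊗[R] A
  /-- the BV operator `Δ`, of degree 1 -/
  d : A →ₗ[R] A

namespace BVData

variable (D : BVData R A)

/-- `τ ⊗ 1` on `A ⊗ (A ⊗ A)` -/
def t12 : A ⊗[R] (A ⊗[R] A) →ₗ[R] A ⊗[R] (A ⊗[R] A) :=
  (TensorProduct.assoc R A A A).toLinearMap ∘ₗ
    map D.τ (LinearMap.id : A →ₗ[R] A) ∘ₗ (TensorProduct.assoc R A A A).symm.toLinearMap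

/-- `1 ⊗ τ` on `A ⊗ (A ⊗ A)` -/
def t23 : A ⊗[R] (A ⊗[R] A) →ₗ[R] A ⊗[R] (A ⊗[R] A) :=
  map (LinearMap.id : A →ₗ[R] A) D.τ

/-- the cyclic permutation `σ = (τ⊗1)(1⊗τ)` -/
def sig : A ⊗[R] (A ⊗[R] A) →ₗ[R] A ⊗[R] (A ⊗[R] A) := D.t12 ∘ₗ D.t23

/-- `1 + σ + σ²` -/
def cyc : A ⊗[R] (A ⊗[R] A) →ₗ[R] A ⊗[R] (A ⊗[R] A) :=
  LinearMap.id + D.sig + D.sig ∘ₗ D.sig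

/-- `μ ⊗ 1` -/
def mulL : A ⊗[R] (A ⊗[R] A) →ₗ[R] A ⊗[R] A :=
  map D.mul (LinearMap.id : A →ₗ[R] A) ∘ₗ (TensorProduct.assoc R A A A).symm.toLinearMap

/-- `1 ⊗ μ` (no Koszul sign: `μ` is even) -/
def mulR : A ⊗[R] (A ⊗[R] A) →ₗ[R] A ⊗[R] A :=
  map (LinearMap.id : A →ₗ[R] A) D.mul

/-- `λ ⊗ 1` -/
def copL : A ⊗[R] A →ₗ[R] A ⊗[R] (A ⊗[R] A) :=
  (TensorProduct.assoc R A A A).toLinearMap ∘ₗ map D.cop (LinearMap.id : A →ₗ[R] A)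

/-- `1 ⊗ λ` (with Koszul sign: `λ` is odd) -/
def copR : A ⊗[R] A →ₗ[R] A ⊗[R] (A ⊗[R] A) := map D.ι D.cop

/-- `Δ ⊗ 1` -/
def dL : A ⊗[R] A →ₗ[R] A ⊗[R] A := map D.d (LinearMap.id : A →ₗ[R] A)

/-- `1 ⊗ Δ` (with Koszul sign) -/
def dR : A ⊗[R] A →ₗ[R] A ⊗[R] A := map D.ι D.d

/-- `Δ ⊗ 1 ⊗ 1` -/
def d1 : A ⊗[R] (A ⊗[R] A) →ₗ[R] A ⊗[R] (A ⊗[R] A) :=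
  map D.d (LinearMap.id : A ⊗[R] A →ₗ[R] A ⊗[R] A)

/-- `1 ⊗ Δ ⊗ 1` (with Koszul sign) -/
def d2 : A ⊗[R] (A ⊗[R] A) →ₗ[R] A ⊗[R] (A ⊗[R] A) :=
  map D.ι (map D.d (LinearMap.id : A →ₗ[R] A))

/-- `1 ⊗ 1 ⊗ Δ` (with Koszul sign) -/
def d3 : A ⊗[R] (A ⊗[R] A) →ₗ[R] A ⊗[R] (A ⊗[R] A) :=
  map D.ι (map D.ι D.d)

/-- the copairing `λη = λ(η(1))` -/
def copair : A ⊗[R] A := D.cop D.e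

/-- `(Δμ) ⊗ 1` -/
def dmul1 : A ⊗[R] (A ⊗[R] A) →ₗ[R] A ⊗[R] A :=
  map (D.d ∘ₗ D.mul) (LinearMap.id : A →ₗ[R] A)
    ∘ₗ (TensorProduct.assoc R A A A).symm.toLinearMap

/-- `(λΔ) ⊗ 1` -/
def copd1 : A ⊗[R] A →ₗ[R] A ⊗[R] (A ⊗[R] A) :=
  (TensorProduct.assoc R A A A).toLinearMap
    ∘ₗ map (D.cop ∘ₗ D.d) (LinearMap.id : A →ₗ[R] A)

/-- the BV bracket `β = [Δ, μ] = Δμ - μ(Δ⊗1) - μ(1⊗Δ)` (degree 1) -/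
def bracket : A ⊗[R] A →ₗ[R] A :=
  D.d ∘ₗ D.mul - D.mul ∘ₗ D.dL - D.mul ∘ₗ D.dR

/-- the BV cobracket `γ = [Δ, λ] = λΔ + (Δ⊗1)λ + (1⊗Δ)λ` (even degree) -/
def cobracket : A →ₗ[R] A ⊗[R] A :=
  D.cop ∘ₗ D.d + D.dL ∘ₗ D.cop + D.dR ∘ₗ D.cop

/-- `β ⊗ 1` -/
def braL : A ⊗[R] (A ⊗[R] A) →ₗ[R] A ⊗[R] A :=
  map D.bracket (LinearMap.id : A →ₗ[R] A)
    ∘ₗ (TensorProduct.assoc R A A A).symm.toLinearMap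

/-- `1 ⊗ β` (with Koszul sign: `β` is odd) -/
def braR : A ⊗[R] (A ⊗[R] A) →ₗ[R] A ⊗[R] A := map D.ι D.bracket

/-- `γ ⊗ 1` -/
def cobraL : A ⊗[R] A →ₗ[R] A ⊗[R] (A ⊗[R] A) :=
  (TensorProduct.assoc R A A A).toLinearMap
    ∘ₗ map D.cobracket (LinearMap.id : A →ₗ[R] A)

/-- `1 ⊗ γ` (no Koszul sign: `γ` is even) -/
def cobraR : A ⊗[R] A →ₗ[R] A ⊗[R] (A ⊗[R] A) :=
  map (LinearMap.id : A →ₗ[R] A) D.cobracket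

end BVData

/-- `(f ⊗ g)(1 ⊗ c ⊗ 1)` where `c ∈ A ⊗ A` is inserted in the middle and `s` is the
Koszul sign operator acting on the first slot:
`a ⊗ b ↦ Σ f(s(a) ⊗ c') ⊗ g(c'' ⊗ b)` for `c = Σ c' ⊗ c''`. -/
noncomputable def insertMid (f g : A ⊗[R] A →ₗ[R] A) (s : A →ₗ[R] A) (c : A ⊗[R] A) :
    A ⊗[R] A →ₗ[R] A ⊗[R] A :=
  map f g
    ∘ₗ (TensorProduct.assoc R A A (A ⊗[R] A)).symm.toLinearMap
    ∘ₗ map (LinearMap.id : A →ₗ[R] A) (TensorProduct.assoc R A A A).toLinearMap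
    ∘ₗ map s (TensorProduct.mk R (A ⊗[R] A) A c)

/-- Background axioms of the grading: `ι` is the parity involution, `τ` the Koszul twist;
`μ` and `η` are even, `λ` and `Δ` are odd. -/
structure IsGraded (D : BVData R A) : Prop where
  invol : D.ι ∘ₗ D.ι = LinearMap.id
  tausq : D.τ ∘ₗ D.τ = LinearMap.id
  tau_parity : D.τ ∘ₗ map D.ι D.ι = map D.ι D.ι ∘ₗ D.τ
  tau_nat_iota : D.τ ∘ₗ map D.ι (LinearMap.id : A →ₗ[R] A)
      = map (LinearMap.id : A →ₗ[R] A) D.ι ∘ₗ D.τ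
  tau_nat_d : D.τ ∘ₗ D.dL = D.dR ∘ₗ D.τ
  mul_even : D.ι ∘ₗ D.mul = D.mul ∘ₗ map D.ι D.ι
  unit_even : D.ι D.e = D.e
  cop_odd : map D.ι D.ι ∘ₗ D.cop = -(D.cop ∘ₗ D.ι)
  d_odd : D.ι ∘ₗ D.d = -(D.d ∘ₗ D.ι)

/-- The axioms of an odd BV unital infinitesimal bialgebra. -/
structure IsBVui (D : BVData R A) extends IsGraded D : Prop where
  mul_assoc : D.mul ∘ₗ D.mulL = D.mul ∘ₗ D.mulR
  mul_comm : D.mul ∘ₗ D.τ = D.mul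
  unit_mul : ∀ a : A, D.mul (D.e ⊗ₜ[R] a) = a
  mul_unit : ∀ a : A, D.mul (a ⊗ₜ[R] D.e) = a
  cop_coassoc : D.copL ∘ₗ D.cop = -(D.copR ∘ₗ D.cop)
  cop_cocomm : D.τ ∘ₗ D.cop = -D.cop
  d_squared : D.d ∘ₗ D.d = 0
  /-- the unital infinitesimal relation
  `λμ = (1⊗μ)(λ⊗1) + (μ⊗1)(1⊗λ) - (μ⊗μ)(1⊗λη⊗1)` -/
  unital_infinitesimal :
    D.cop ∘ₗ D.mul =
      D.mulR ∘ₗ D.copL + D.mulL ∘ₗ D.copR - insertMid D.mul D.mul D.ι D.copair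
  /-- the 7-term relation for `Δ` and `μ`:
  `Δμ(μ⊗1) = [μ(Δμ⊗1) - μ(μ⊗1)(Δ⊗1⊗1)](1+σ+σ²)` -/
  seven_mul :
    D.d ∘ₗ D.mul ∘ₗ D.mulL =
      (D.mul ∘ₗ D.dmul1 - D.mul ∘ₗ D.mulL ∘ₗ D.d1) ∘ₗ D.cyc
  /-- the 7-term relation for `Δ` and `λ`:
  `(λ⊗1)λΔ = -(1+σ+σ²)[(Δ⊗1⊗1)(λ⊗1)λ + (λΔ⊗1)λ]` -/
  seven_cop :
    D.copL ∘ₗ D.cop ∘ₗ D.d =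
      -(D.cyc ∘ₗ (D.d1 ∘ₗ D.copL ∘ₗ D.cop + D.copd1 ∘ₗ D.cop))
  /-- the 11-term relation for `Δ`, `μ`, `λ` and `η` -/
  eleven :
    D.cop ∘ₗ D.d ∘ₗ D.mul =
      D.cop ∘ₗ D.mul ∘ₗ D.dL + D.cop ∘ₗ D.mul ∘ₗ D.dR
      - D.dL ∘ₗ D.cop ∘ₗ D.mul - D.dR ∘ₗ D.cop ∘ₗ D.mul
      + D.mulL ∘ₗ D.d2 ∘ₗ D.copR ∘ₗ (LinearMap.id + D.τ)
      + D.mulR ∘ₗ D.d2 ∘ₗ D.copL ∘ₗ (LinearMap.id + D.τ)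
      - insertMid D.mul D.mul (D.ι ∘ₗ D.ι) (D.dR D.copair) ∘ₗ (LinearMap.id + D.τ)

/-- The axioms of an odd (BV) Frobenius algebra, without the BV Frobenius relation:
`(A, μ, λ, η, ε)` is a graded Frobenius algebra with `|μ| = 0` and `|λ|` odd,
and `(A, μ, η, Δ)` is a BV algebra. -/
structure IsBVFrobCore (D : BVData R A) (ε : A →ₗ[R] R) extends IsGraded D : Prop where
  eps_odd : ε ∘ₗ D.ι = -ε
  mul_assoc : D.mul ∘ₗ D.mulL = D.mul ∘ₗ D.mulR
  mul_comm : D.mul ∘ₗ D.τ = D.mul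
  unit_mul : ∀ a : A, D.mul (D.e ⊗ₜ[R] a) = a
  mul_unit : ∀ a : A, D.mul (a ⊗ₜ[R] D.e) = a
  cop_coassoc : D.copL ∘ₗ D.cop = -(D.copR ∘ₗ D.cop)
  cop_cocomm : D.τ ∘ₗ D.cop = -D.cop
  /-- `(ε⊗1)λ = 1` -/
  counit_l : (TensorProduct.lid R A).toLinearMap ∘ₗ
      map ε (LinearMap.id : A →ₗ[R] A) ∘ₗ D.cop = LinearMap.id
  /-- `(1⊗ε)λ = -1` (with Koszul sign) -/
  counit_r : (TensorProduct.rid R A).toLinearMap ∘ₗ map D.ι ε ∘ₗ D.cop = -LinearMap.id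
  /-- the Frobenius relation `λμ = (μ⊗1)(1⊗λ)` -/
  frobenius_l : D.cop ∘ₗ D.mul = D.mulL ∘ₗ D.copR
  /-- the Frobenius relation `λμ = (1⊗μ)(λ⊗1)` -/
  frobenius_r : D.cop ∘ₗ D.mul = D.mulR ∘ₗ D.copL
  d_squared : D.d ∘ₗ D.d = 0
  /-- the 7-term relation for `Δ` and `μ` -/
  seven_mul :
    D.d ∘ₗ D.mul ∘ₗ D.mulL =
      (D.mul ∘ₗ D.dmul1 - D.mul ∘ₗ D.mulL ∘ₗ D.d1) ∘ₗ D.cyc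

/-- The axioms of an odd BV Frobenius algebra. -/
structure IsBVFrob (D : BVData R A) (ε : A →ₗ[R] R) extends IsBVFrobCore D ε : Prop where
  /-- the BV Frobenius relation `(Δ⊗1)λη = (1⊗Δ)λη` -/
  bv_frobenius : D.dL D.copair = D.dR D.copair


section Statement11Aux

open LinearMap

variable (D : BVData R A) (ε : A →ₗ[R] R)

/-- `t ↦ (ε⊗1)(μ⊗1)(ιa ⊗ t)` -/
noncomputable def Fm (a : A) : A ⊗[R] A →ₗ[R] A :=
  (TensorProduct.lid R A).toLinearMap ∘ₗ map ε (LinearMap.id : A →ₗ[R] A) ∘ₗ D.mulL ∘ₗ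
    TensorProduct.mk R A (A ⊗[R] A) (D.ι a)

/-- `t ↦ -(ι⊗εμ)(t ⊗ b)` (suitably associated) -/
noncomputable def Gm (b : A) : A ⊗[R] A →ₗ[R] A :=
  -((TensorProduct.rid R A).toLinearMap ∘ₗ map D.ι (ε ∘ₗ D.mul) ∘ₗ
    (TensorProduct.assoc R A A A).toLinearMap ∘ₗ (TensorProduct.mk R (A ⊗[R] A) A).flip b)

/-- `x ↦ -(ι⊗εμ)(s ⊗ x)` -/
noncomputable def Nm (s : A ⊗[R] A) : A →ₗ[R] A :=
  -((TensorProduct.rid R A).toLinearMap ∘ₗ map D.ι (ε ∘ₗ D.mul) ∘ₗ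
    (TensorProduct.assoc R A A A).toLinearMap ∘ₗ TensorProduct.mk R (A ⊗[R] A) A s)

lemma Fm_tmul (a u v : A) : Fm D ε a (u ⊗ₜ[R] v) = ε (D.mul (D.ι a ⊗ₜ[R] u)) • v := by
  simp [Fm, BVData.mulL]

lemma Gm_tmul (b u v : A) : Gm D ε b (u ⊗ₜ[R] v) = -(ε (D.mul (v ⊗ₜ[R] b)) • D.ι u) := by
  simp [Gm]

lemma Nm_tmul (u v x : A) : Nm D ε (u ⊗ₜ[R] v) x = -(ε (D.mul (v ⊗ₜ[R] x)) • D.ι u) := by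
  simp [Nm]

lemma Gm_eq_Nm (b : A) (t : A ⊗[R] A) : Gm D ε b t = Nm D ε t b := by
  simp [Gm, Nm]

lemma cop_eq_l (h : IsBVFrobCore D ε) (x : A) :
    D.cop x = D.mulL (D.ι x ⊗ₜ[R] D.copair) := by
  have h1 := LinearMap.congr_fun h.frobenius_l (x ⊗ₜ[R] D.e)
  simpa [BVData.copR, h.mul_unit, BVData.copair] using h1

lemma cop_eq_r (h : IsBVFrobCore D ε) (x : A) :
    D.cop x = D.mulR ((TensorProduct.assoc R A A A) (D.copair ⊗ₜ[R] x)) := by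
  have h1 := LinearMap.congr_fun h.frobenius_r (D.e ⊗ₜ[R] x)
  simpa [BVData.copL, h.unit_mul, BVData.copair] using h1

lemma star2 (h : IsBVFrobCore D ε) (x : A) : Fm D ε x D.copair = x := by
  have h1 := LinearMap.congr_fun h.counit_l x
  have h2 : Fm D ε x D.copair =
      (TensorProduct.lid R A) (map ε (LinearMap.id : A →ₗ[R] A) (D.cop x)) := by
    rw [cop_eq_l D ε h x]; rfl
  simpa [h2] using h1

lemma map_iota_eps_mulR :
    map D.ι ε ∘ₗ D.mulR = map D.ι (ε ∘ₗ D.mul) := by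
  rw [BVData.mulR, ← TensorProduct.map_comp, LinearMap.comp_id]

lemma Nm_copair (h : IsBVFrobCore D ε) : Nm D ε D.copair = LinearMap.id := by
  ext x
  have h1 := LinearMap.congr_fun h.counit_r x
  have h2 : map D.ι (ε ∘ₗ D.mul) ((TensorProduct.assoc R A A A) (D.copair ⊗ₜ[R] x))
      = map D.ι ε (D.cop x) := by
    rw [← map_iota_eps_mulR D ε, LinearMap.comp_apply, ← cop_eq_r D ε h x]
  simp only [Nm, LinearMap.neg_apply, LinearMap.comp_apply, TensorProduct.mk_apply,
    LinearEquiv.coe_coe, h2]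
  simp only [LinearMap.comp_apply, LinearEquiv.coe_coe, LinearMap.neg_apply,
    LinearMap.id_apply] at h1 ⊢
  rw [h1]; simp

lemma Gm_copair (h : IsBVFrobCore D ε) (b : A) : Gm D ε b D.copair = b := by
  rw [Gm_eq_Nm, Nm_copair D ε h]; rfl

lemma d_Fm (a : A) (t : A ⊗[R] A) :
    D.d (Fm D ε a t) = Fm D ε a (map (LinearMap.id : A →ₗ[R] A) D.d t) := by
  induction t using TensorProduct.induction_on with
  | zero => simp
  | tmul u v => simp [Fm_tmul]
  | add t1 t2 ih1 ih2 => simp [map_add, ih1, ih2]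

lemma d_Gm (h : IsBVFrobCore D ε) (b : A) (t : A ⊗[R] A) :
    D.d (Gm D ε b t) = -(Gm D ε b (D.dL t)) := by
  induction t using TensorProduct.induction_on with
  | zero => simp [BVData.dL]
  | tmul u v =>
    have hd := LinearMap.congr_fun h.d_odd u
    simp only [LinearMap.comp_apply, LinearMap.neg_apply] at hd
    have hdl : D.dL (u ⊗ₜ[R] v) = D.d u ⊗ₜ[R] v := by simp [BVData.dL]
    rw [hdl, Gm_tmul, Gm_tmul]
    simp [map_smul, hd, smul_neg, neg_neg]
  | add t1 t2 ih1 ih2 =>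
    simp only [BVData.dL] at ih1 ih2 ⊢
    simp only [map_add, ih1, ih2]
    abel

lemma f5 (a b : A) (t : A ⊗[R] A) :
    ε (D.mul (Fm D ε a (map D.ι (LinearMap.id : A →ₗ[R] A) t) ⊗ₜ[R] b))
      = -(ε (D.mul (D.ι a ⊗ₜ[R] Gm D ε b t))) := by
  induction t using TensorProduct.induction_on with
  | zero => simp
  | tmul u v =>
    simp only [TensorProduct.map_tmul, LinearMap.id_apply, Fm_tmul, Gm_tmul,
      TensorProduct.tmul_neg, TensorProduct.tmul_smul,
      map_neg, map_smul, smul_eq_mul, neg_neg, ← TensorProduct.smul_tmul']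
    ring
  | add t1 t2 ih1 ih2 =>
    simp only [map_add, TensorProduct.add_tmul, TensorProduct.tmul_add, ih1, ih2]
    ring

lemma map_smulRight (g : A →ₗ[R] R) (w : A) (t : A ⊗[R] A) :
    map (g.smulRight w) (LinearMap.id : A →ₗ[R] A) t
      = w ⊗ₜ[R] (TensorProduct.lid R A) (map g (LinearMap.id : A →ₗ[R] A) t) := by
  induction t using TensorProduct.induction_on with
  | zero => simp
  | tmul u v => simp [TensorProduct.smul_tmul, TensorProduct.tmul_smul]
  | add t1 t2 ih1 ih2 => simp [map_add, TensorProduct.tmul_add, ih1, ih2]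

lemma star2' (h : IsBVFrobCore D ε) (y : A) :
    (TensorProduct.lid R A) (map (ε ∘ₗ D.mul ∘ₗ TensorProduct.mk R A A (D.ι y))
      (LinearMap.id : A →ₗ[R] A) D.copair) = y := by
  have hall : ∀ t : A ⊗[R] A,
      (TensorProduct.lid R A) (map (ε ∘ₗ D.mul ∘ₗ TensorProduct.mk R A A (D.ι y))
        (LinearMap.id : A →ₗ[R] A) t) = Fm D ε y t := by
    intro t
    induction t using TensorProduct.induction_on with
    | zero => simp
    | tmul u v => simp [Fm_tmul]
    | add t1 t2 ih1 ih2 => simp [map_add, ih1, ih2]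
  rw [hall, star2 D ε h]

end Statement11Aux

/-- For an odd (BV) Frobenius algebra `(A, μ, λ, η, ε, Δ)`, the BV
Frobenius relation `(Δ⊗1)λη = (1⊗Δ)λη` is equivalent to `εμ(Δ⊗1) = εμ(1⊗Δ)`. -/
theorem bv_frobenius_relation_iff_counit_form (D : BVData R A) (ε : A →ₗ[R] R)
    (h : IsBVFrobCore D ε) :
    D.dL D.copair = D.dR D.copair ↔
      ε ∘ₗ D.mul ∘ₗ D.dL = ε ∘ₗ D.mul ∘ₗ D.dR := by
  have h2gen : ∀ t : A ⊗[R] A,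
      map D.ι (LinearMap.id : A →ₗ[R] A) (map D.ι D.d t)
        = map (LinearMap.id : A →ₗ[R] A) D.d t := by
    intro t
    induction t using TensorProduct.induction_on with
    | zero => simp
    | tmul u v =>
      have hinv := LinearMap.congr_fun h.invol u
      simp only [LinearMap.comp_apply, LinearMap.id_apply] at hinv
      simp [hinv]
    | add t1 t2 ih1 ih2 => simp [map_add, ih1, ih2]
  constructor
  · intro hfrob
    apply TensorProduct.ext'
    intro a b
    have hDa : D.d a = Fm D ε a (map D.ι (LinearMap.id : A →ₗ[R] A) (D.dL D.copair)) := by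
      have h1 : D.d a = Fm D ε a (map (LinearMap.id : A →ₗ[R] A) D.d D.copair) := by
        rw [← d_Fm, star2 D ε h]
      rw [h1, ← h2gen D.copair,
        show map D.ι D.d D.copair = D.dR D.copair from rfl, ← hfrob]
    have hDb : D.d b = -(Gm D ε b (D.dL D.copair)) := by
      have hx := d_Gm D ε h b D.copair
      rw [Gm_copair D ε h b] at hx
      exact hx
    have hgoal := f5 D ε a b (D.dL D.copair)
    have e1 : (ε ∘ₗ D.mul ∘ₗ D.dL) (a ⊗ₜ[R] b) = ε (D.mul (D.d a ⊗ₜ[R] b)) := by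
      simp [BVData.dL]
    have e2 : (ε ∘ₗ D.mul ∘ₗ D.dR) (a ⊗ₜ[R] b) = ε (D.mul (D.ι a ⊗ₜ[R] D.d b)) := by
      simp [BVData.dR]
    rw [e1, e2, hDa, hDb, TensorProduct.tmul_neg, map_neg, map_neg, hgoal]
  · intro hp
    have hps : ∀ v x : A,
        ε (D.mul (v ⊗ₜ[R] D.d x)) = -ε (D.mul (D.ι (D.d v) ⊗ₜ[R] x)) := by
      intro v x
      have h1 := LinearMap.congr_fun hp (D.ι v ⊗ₜ[R] x)
      have hinv := LinearMap.congr_fun h.invol v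
      have hd := LinearMap.congr_fun h.d_odd v
      simp only [LinearMap.comp_apply, LinearMap.neg_apply, LinearMap.id_apply] at hinv hd h1
      simp only [BVData.dL, BVData.dR, TensorProduct.map_tmul, LinearMap.id_apply,
        hinv] at h1
      have hdi : D.d (D.ι v) = -D.ι (D.d v) := by rw [hd, neg_neg]
      rw [hdi] at h1
      simp only [TensorProduct.neg_tmul, map_neg] at h1
      exact h1.symm
    have hT : ∀ s : A ⊗[R] A,
        map (Nm D ε s ∘ₗ D.d) (LinearMap.id : A →ₗ[R] A) D.copair = map D.ι D.d s := by
      intro s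
      induction s using TensorProduct.induction_on with
      | zero =>
        have hz : Nm D ε (0 : A ⊗[R] A) ∘ₗ D.d = 0 := by
          ext x; simp [Nm]
        rw [hz]
        have hmz : map (0 : A →ₗ[R] A) (LinearMap.id : A →ₗ[R] A)
            = (0 : A ⊗[R] A →ₗ[R] A ⊗[R] A) := by
          apply TensorProduct.ext'; intro u v; simp
        simp [hmz]
      | tmul u v =>
        have hcz : Nm D ε (u ⊗ₜ[R] v) ∘ₗ D.d
            = (ε ∘ₗ D.mul ∘ₗ TensorProduct.mk R A A (D.ι (D.d v))).smulRight (D.ι u) := by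
          ext x
          simp only [LinearMap.comp_apply, Nm_tmul, LinearMap.smulRight_apply,
            TensorProduct.mk_apply]
          rw [hps v x]
          simp
        rw [hcz, map_smulRight, star2' D ε h]
        simp
      | add s1 s2 ih1 ih2 =>
        have hadd : Nm D ε (s1 + s2) ∘ₗ D.d = Nm D ε s1 ∘ₗ D.d + Nm D ε s2 ∘ₗ D.d := by
          ext x
          simp only [LinearMap.comp_apply, LinearMap.add_apply, Nm, LinearMap.neg_apply]
          rw [map_add (TensorProduct.mk R (A ⊗[R] A) A)]
          simp [TensorProduct.add_tmul]
          abel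
        have hmapadd : map (Nm D ε s1 ∘ₗ D.d + Nm D ε s2 ∘ₗ D.d)
            (LinearMap.id : A →ₗ[R] A)
            = map (Nm D ε s1 ∘ₗ D.d) (LinearMap.id : A →ₗ[R] A)
              + map (Nm D ε s2 ∘ₗ D.d) (LinearMap.id : A →ₗ[R] A) := by
          apply TensorProduct.ext'; intro u' v'
          simp [TensorProduct.add_tmul]
        rw [hadd, hmapadd]
        simp [map_add, ih1, ih2]
    have hfinal : D.dL D.copair
        = map (Nm D ε D.copair ∘ₗ D.d) (LinearMap.id : A →ₗ[R] A) D.copair := by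
      rw [Nm_copair D ε h, LinearMap.id_comp]; rfl
    rw [hfinal, hT D.copair]; rfl
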